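/- Suppose b(+)/a(+) ≤ b(−)/a(−) and b(+)/a(+) < N, and let S_min be a real number with 0 < S_min < b(+)/(2a(+)) such that −N·a(σ)·S_min + c(σ)·(b(+)/(2a(+)) − S_min) > 0 for each σ ∈ E. Define the quadrangle Q = {(s, i) ∈ ℝ² : s ≥ S_min, i ≥ 0, s + i ≤ N, i ≤ N − b(+)/(2a(+))}. Then: (i) Q is forward invariant, i.e. for every switching signal ξ, every solution (S, I) of the switched SIRS system, and every t₀ ≥ 0 with (S(t₀), I(t₀)) ∈ Q, one has (S(t), I(t)) ∈ Q for all t ≥ t₀; (ii) Q absorbs all positive solutions: for every switching signal ξ and every solution with S(0) > 0, I(0) > 0, S(0) + I(0) ≤ N, there exists T ≥ 0 such that (S(t), I(t)) ∈ Q for all t ≥ T. -/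

import Mathlib

open Filter MeasureTheory

/-- The state space of environments: `true` is `+`, `false` is `−`. -/
abbrev Env := Bool

/-- `ξ` is locally constant (as a function on `[0,∞)`) at the point `t`. -/
def ContPt (ξ : ℝ → Env) (t : ℝ) : Prop :=
  ∀ᶠ s in nhdsWithin t (Set.Ici (0:ℝ)), ξ s = ξ t

/-- A switching signal: right-continuous, piecewise constant,
with locally finite set of discontinuities in `[0,∞)`. -/
def IsSwitchingSignal (ξ : ℝ → Env) : Prop :=
  (∀ t : ℝ, 0 ≤ t → ∀ᶠ s in nhdsWithin t (Set.Ici t), ξ s = ξ t) ∧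
  (∀ T : ℝ, {t : ℝ | 0 ≤ t ∧ t ≤ T ∧ ¬ ContPt ξ t}.Finite)

/-- `(S, I)` is a solution of the switched SIRS system driven by `ξ`:
continuous on `[0,∞)` and satisfying the SIRS equations at every
`t ≥ 0` which is not a discontinuity of `ξ`. -/
def IsSIRSSolution (N : ℝ) (a b c : Env → ℝ) (ξ : ℝ → Env) (S I : ℝ → ℝ) : Prop :=
  ContinuousOn S (Set.Ici (0:ℝ)) ∧ ContinuousOn I (Set.Ici (0:ℝ)) ∧
  ∀ t : ℝ, 0 ≤ t → ContPt ξ t →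
    HasDerivWithinAt S (-(a (ξ t) * S t * I t) + c (ξ t) * (N - S t - I t)) (Set.Ici (0:ℝ)) t ∧
    HasDerivWithinAt I (a (ξ t) * S t * I t - b (ξ t) * I t) (Set.Ici (0:ℝ)) t

/-- `ξ` has mean growth rate `lam`:
`lim_{t→∞} (1/t) ∫₀ᵗ (a(ξ(s))·N − b(ξ(s))) ds = lam`. -/
def HasMeanGrowthRate (N : ℝ) (a b : Env → ℝ) (ξ : ℝ → Env) (lam : ℝ) : Prop :=
  Tendsto (fun t : ℝ => (1 / t) * ∫ s in (0:ℝ)..t, (a (ξ s) * N - b (ξ s)))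
    atTop (nhds lam)

/-!
Each side of the quadrangle is a barrier that the vector fields of both environments cross
only inwards: on `I = N - θ`, with `θ = b₊ / (2 a₊)`, we have `S ≤ θ`, and `a σ θ < b σ` because
`b₊ / a₊` is the smaller of the two ratios; on `S = Smin` the rate hypothesis makes `S' > 0`.
Since the signal switches only finitely often on bounded intervals, each barrier argument
reduces to a one-sided comparison principle for functions with right derivatives off a finite
set. For absorption, `I` decays exponentially while it exceeds `N - θ`, and afterwards `S`
grows at a uniform linear rate while it is below `Smin`.
-/

open Set Topology Real

theorem le_mul_exp_of_hasDerivWithinAt_le_mul {f f' : ℝ → ℝ} {p q K δ : ℝ} (hδ : 0 ≤ δ)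
    (hf : ContinuousOn f (Icc p q))
    (hf' : ∀ t ∈ Ico p q, HasDerivWithinAt f (f' t) (Ici t) t)
    (bound : ∀ t ∈ Ico p q, 0 ≤ f t → f' t ≤ K * f t) (hp : f p ≤ δ) :
    ∀ t ∈ Icc p q, f t ≤ δ * exp (K * (t - p)) := by
  intro t ht
  refine le_of_forall_pos_le_add fun ε hε => ?_
  -- `B` is a strict supersolution of `B' = K B`, and `B t` exceeds the target bound by `ε`
  set B : ℝ → ℝ := fun s => δ * exp (K * (s - p)) + ε * exp ((K + 1) * (s - t))
  have hB : ∀ s, HasDerivAt B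
      (K * (δ * exp (K * (s - p))) + (K + 1) * (ε * exp ((K + 1) * (s - t)))) s := by
    intro s
    have h₁ := (((hasDerivAt_id s).sub_const p).const_mul K).exp.const_mul δ
    have h₂ := (((hasDerivAt_id s).sub_const t).const_mul (K + 1)).exp.const_mul ε
    exact (h₁.add h₂).congr_deriv (by simp only [id]; ring)
  have hBpos : ∀ s, 0 < B s := fun s =>
    add_pos_of_nonneg_of_pos (mul_nonneg hδ (exp_pos _).le) (mul_pos hε (exp_pos _))
  have hfB := image_le_of_deriv_right_lt_deriv_boundary' hf hf' (B := B)
    (by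
      have : B p = δ + ε * exp ((K + 1) * (p - t)) := by simp [B]
      linarith [hBpos p, mul_pos hε (exp_pos ((K + 1) * (p - t)))])
    (fun s _ => (hB s).continuousAt.continuousWithinAt) (fun s _ => (hB s).hasDerivWithinAt)
    (fun s hs hfs => by
      have := bound s hs (hfs ▸ (hBpos s).le)
      rw [hfs] at this
      have : 0 < ε * exp ((K + 1) * (s - t)) := by positivity
      simp only [B] at *
      linarith) ht
  simpa [B] using hfB

theorem nonpos_of_hasDerivWithinAt_le_mul {f f' : ℝ → ℝ} {p q K : ℝ}
    (hf : ContinuousOn f (Icc p q))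
    (hf' : ∀ t ∈ Ioo p q, HasDerivWithinAt f (f' t) (Ici t) t)
    (bound : ∀ t ∈ Ioo p q, 0 ≤ f t → f' t ≤ K * f t) (hp : f p ≤ 0) :
    ∀ t ∈ Icc p q, f t ≤ 0 := by
  rintro t ⟨hpt, htq⟩
  rcases hpt.eq_or_lt with rfl | hpt
  · exact hp
  -- `f` need not be differentiable at `p`: compare from `p' ∈ (p, t)` and let `p' → p`
  have hbound : ∀ᶠ p' in 𝓝[>] p, f t ≤ max (f p') 0 * exp (K * (t - p')) := by
    filter_upwards [Ioo_mem_nhdsGT hpt] with p' hp'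
    refine le_mul_exp_of_hasDerivWithinAt_le_mul (le_max_right _ _)
      (hf.mono (Icc_subset_Icc_left hp'.1.le)) (fun s hs => hf' s ⟨hp'.1.trans_le hs.1, hs.2⟩)
      (fun s hs => bound s ⟨hp'.1.trans_le hs.1, hs.2⟩) (le_max_left _ _) t ⟨hp'.2.le, htq⟩
  have hlim : Tendsto (fun p' => max (f p') 0 * exp (K * (t - p'))) (𝓝[>] p)
      (𝓝 (max (f p) 0 * exp (K * (t - p)))) := by
    have hfp : Tendsto f (𝓝[>] p) (𝓝 (f p)) :=
      (hf p ⟨le_rfl, hpt.le.trans htq⟩).tendsto.mono_left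
        (nhdsWithin_le_of_mem (Icc_mem_nhdsGT (hpt.trans_le htq)))
    refine (hfp.max tendsto_const_nhds).mul
      ((Continuous.tendsto ?_ p).mono_left nhdsWithin_le_nhds)
    fun_prop
  simpa [max_eq_right hp] using ge_of_tendsto hlim hbound

theorem nonpos_of_hasDerivWithinAt_le_mul_off_finite {f f' : ℝ → ℝ} {x y K : ℝ} {D : Set ℝ}
    (hD : D.Finite) (hf : ContinuousOn f (Icc x y))
    (hf' : ∀ t ∈ Ioo x y \ D, HasDerivWithinAt f (f' t) (Ici t) t)
    (bound : ∀ t ∈ Ioo x y \ D, 0 ≤ f t → f' t ≤ K * f t) (hx : f x ≤ 0) :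
    ∀ t ∈ Icc x y, f t ≤ 0 := by
  induction D, hD using Set.Finite.induction_on generalizing x y with
  | empty =>
    exact nonpos_of_hasDerivWithinAt_le_mul hf (fun t ht => hf' t ⟨ht, id⟩)
      (fun t ht => bound t ⟨ht, id⟩) hx
  | @insert d D _ _ ih =>
    by_cases hd : d ∈ Ioo x y
    · have left := ih (hf.mono (Icc_subset_Icc_right hd.2.le))
        (fun t ht => hf' t ⟨⟨ht.1.1, ht.1.2.trans hd.2⟩, by grind⟩)
        (fun t ht => bound t ⟨⟨ht.1.1, ht.1.2.trans hd.2⟩, by grind⟩) hx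
      have right := ih (hf.mono (Icc_subset_Icc_left hd.1.le))
        (fun t ht => hf' t ⟨⟨hd.1.trans ht.1.1, ht.1.2⟩, by grind⟩)
        (fun t ht => bound t ⟨⟨hd.1.trans ht.1.1, ht.1.2⟩, by grind⟩)
        (left d ⟨hd.1.le, le_rfl⟩)
      intro t ht
      rcases le_total t d with htd | hdt
      · exact left t ⟨ht.1, htd⟩
      · exact right t ⟨hdt, ht.2⟩
    · exact ih hf (fun t ht => hf' t ⟨ht.1, by grind⟩) (fun t ht => bound t ⟨ht.1, by grind⟩) hx

theorem infected_rate_le {a b θ s i : ℝ} (ha : 0 ≤ a) (hi : 0 ≤ i) (hs : s ≤ θ) :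
    a * s * i - b * i ≤ (a * θ - b) * i := by
  nlinarith [mul_le_mul_of_nonneg_left hs ha]

theorem susceptible_rate_ge {a c N Smin θ s i : ℝ} (ha : 0 ≤ a) (hc : 0 ≤ c) (hSmin : 0 ≤ Smin)
    (hθ : 0 ≤ θ) (hs : s ≤ Smin) (hi : 0 ≤ i) (hiθ : i ≤ N - θ) :
    -(N * a * Smin) + c * (θ - Smin) ≤ -(a * s * i) + c * (N - s - i) := by
  have hsi : s * i ≤ Smin * N := by nlinarith [mul_le_mul_of_nonneg_right hs hi]
  nlinarith [mul_le_mul_of_nonneg_left hsi ha, mul_le_mul_of_nonneg_left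
    (show θ - Smin ≤ N - s - i by linarith) hc]

theorem mul_lt_of_lt_min_ratio {a b : Env → ℝ} (ha : ∀ σ, 0 < a σ)
    (horder : b true / a true ≤ b false / a false) {θ : ℝ} (hθ : θ < b true / a true)
    (σ : Env) : a σ * θ < b σ := by
  have hratio : b true / a true ≤ b σ / a σ := by cases σ; exacts [horder, le_rfl]
  exact (lt_div_iff₀' (ha σ)).1 (hθ.trans_le hratio)

def sirsQuadrangle (N Smin θ : ℝ) : Set (ℝ × ℝ) :=
  {p | Smin ≤ p.1 ∧ 0 ≤ p.2 ∧ p.1 + p.2 ≤ N ∧ p.2 ≤ N - θ}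

namespace IsSIRSSolution

variable {N : ℝ} {a b c : Env → ℝ} {ξ : ℝ → Env} {S I : ℝ → ℝ}

theorem nonpos_of_deriv_le_mul (hsol : IsSIRSSolution N a b c ξ S I) (hξ : IsSwitchingSignal ξ)
    (α β : ℝ) {g g' : ℝ → ℝ} (hg : ∀ t, HasDerivAt g (g' t) t) {x y K : ℝ} (hx : 0 ≤ x)
    (bound : ∀ t ∈ Ioo x y, 0 ≤ α * S t + β * I t + g t →
      α * (-(a (ξ t) * S t * I t) + c (ξ t) * (N - S t - I t)) +
        β * (a (ξ t) * S t * I t - b (ξ t) * I t) + g' t ≤ K * (α * S t + β * I t + g t))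
    (hxf : α * S x + β * I x + g x ≤ 0) :
    ∀ t ∈ Icc x y, α * S t + β * I t + g t ≤ 0 := by
  obtain ⟨hS, hI, hderiv⟩ := hsol
  have hIcc : Icc x y ⊆ Ici 0 := fun s hs => hx.trans hs.1
  refine nonpos_of_hasDerivWithinAt_le_mul_off_finite (hξ.2 y)
    (((continuousOn_const.mul (hS.mono hIcc)).add (continuousOn_const.mul (hI.mono hIcc))).add
      (fun t _ => (hg t).continuousAt.continuousWithinAt)) (fun t ⟨ht, htD⟩ => ?_)
    (fun t ⟨ht, _⟩ => bound t ht) hxf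
  have ht0 : 0 ≤ t := hx.trans ht.1.le
  obtain ⟨hSt, hIt⟩ := hderiv t ht0 (by by_contra h; exact htD ⟨ht0, ht.2.le, h⟩)
  have hsub : Ici t ⊆ Ici 0 := Ici_subset_Ici.2 ht0
  exact (((hSt.mono hsub).const_mul α).add ((hIt.mono hsub).const_mul β)).add
    (hg t).hasDerivWithinAt

theorem infected_nonneg (hsol : IsSIRSSolution N a b c ξ S I) (hξ : IsSwitchingSignal ξ)
    {x : ℝ} (hx : 0 ≤ x) (hIx : 0 ≤ I x) {t : ℝ} (hxt : x ≤ t) : 0 ≤ I t := by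
  -- `-I` solves a linear equation whose coefficient `a S - b` is bounded above on `[x, t]`
  obtain ⟨R, hR⟩ := isCompact_Icc.exists_bound_of_continuousOn
    (hsol.1.mono fun s (hs : s ∈ Icc x t) => hx.trans hs.1)
  obtain ⟨K, hK⟩ := Finite.exists_le fun σ => |a σ| * R - b σ
  have key := hsol.nonpos_of_deriv_le_mul hξ 0 (-1) (fun t => hasDerivAt_const t 0) (K := K) hx
    (fun u hu h0 => by
      have hSu : a (ξ u) * S u ≤ |a (ξ u)| * R := by
        calc a (ξ u) * S u ≤ |a (ξ u) * S u| := le_abs_self _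
          _ = |a (ξ u)| * ‖S u‖ := by rw [abs_mul, Real.norm_eq_abs]
          _ ≤ |a (ξ u)| * R :=
            mul_le_mul_of_nonneg_left (hR u (Ioo_subset_Icc_self hu)) (abs_nonneg _)
      nlinarith [hK (ξ u)])
    (by linarith) t ⟨hxt, le_rfl⟩
  linarith

theorem susceptible_add_infected_le (hsol : IsSIRSSolution N a b c ξ S I) (hξ : IsSwitchingSignal ξ)
    (hb : ∀ σ, 0 ≤ b σ) (hc : ∀ σ, 0 ≤ c σ) {x : ℝ} (hx : 0 ≤ x) (hIx : 0 ≤ I x)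
    (hSIx : S x + I x ≤ N) {t : ℝ} (hxt : x ≤ t) : S t + I t ≤ N := by
  have key := hsol.nonpos_of_deriv_le_mul hξ 1 1 (fun t => hasDerivAt_const t (-N)) (K := 0) hx
    (fun u hu h0 => by
      have hIu := hsol.infected_nonneg hξ hx hIx hu.1.le
      nlinarith [mul_nonneg (hc (ξ u)) h0, mul_nonneg (hb (ξ u)) hIu])
    (by linarith) t ⟨hxt, le_rfl⟩
  linarith

theorem infected_le {θ : ℝ} (hsol : IsSIRSSolution N a b c ξ S I) (hξ : IsSwitchingSignal ξ)
    (ha : ∀ σ, 0 ≤ a σ) (hb : ∀ σ, 0 ≤ b σ) (hc : ∀ σ, 0 ≤ c σ) (hθ : ∀ σ, a σ * θ ≤ b σ)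
    {x : ℝ} (hx : 0 ≤ x) (hIx : 0 ≤ I x) (hSIx : S x + I x ≤ N) (hIθx : I x ≤ N - θ)
    {t : ℝ} (hxt : x ≤ t) : I t ≤ N - θ := by
  have key := hsol.nonpos_of_deriv_le_mul hξ 0 1 (fun t => hasDerivAt_const t (-(N - θ)))
    (K := 0) hx
    (fun u hu h0 => by
      have hIu := hsol.infected_nonneg hξ hx hIx hu.1.le
      have hSIu := hsol.susceptible_add_infected_le hξ hb hc hx hIx hSIx hu.1.le
      have := infected_rate_le (b := b (ξ u)) (ha (ξ u)) hIu (show S u ≤ θ by linarith)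
      nlinarith [mul_nonneg (sub_nonneg.2 (hθ (ξ u))) hIu])
    (by linarith) t ⟨hxt, le_rfl⟩
  linarith

theorem le_susceptible {Smin θ : ℝ} (hsol : IsSIRSSolution N a b c ξ S I)
    (hξ : IsSwitchingSignal ξ) (ha : ∀ σ, 0 ≤ a σ) (hb : ∀ σ, 0 ≤ b σ) (hc : ∀ σ, 0 ≤ c σ)
    (hθ : ∀ σ, a σ * θ ≤ b σ) (hθ0 : 0 ≤ θ) (hSmin : 0 ≤ Smin)
    (hrate : ∀ σ, 0 < -(N * a σ * Smin) + c σ * (θ - Smin))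
    {x : ℝ} (hx : 0 ≤ x) (hSx : Smin ≤ S x) (hIx : 0 ≤ I x) (hSIx : S x + I x ≤ N)
    (hIθx : I x ≤ N - θ) {t : ℝ} (hxt : x ≤ t) : Smin ≤ S t := by
  have key := hsol.nonpos_of_deriv_le_mul hξ (-1) 0 (fun t => hasDerivAt_const t Smin)
    (K := 0) hx
    (fun u hu h0 => by
      have := susceptible_rate_ge (ha (ξ u)) (hc (ξ u)) hSmin hθ0 (show S u ≤ Smin by linarith)
        (hsol.infected_nonneg hξ hx hIx hu.1.le)
        (hsol.infected_le hξ ha hb hc hθ hx hIx hSIx hIθx hu.1.le)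
      nlinarith [hrate (ξ u)])
    (by linarith) t ⟨hxt, le_rfl⟩
  linarith

theorem exists_infected_le {θ : ℝ} (hsol : IsSIRSSolution N a b c ξ S I)
    (hξ : IsSwitchingSignal ξ) (ha : ∀ σ, 0 ≤ a σ) (hb : ∀ σ, 0 ≤ b σ) (hc : ∀ σ, 0 ≤ c σ)
    (hθ : ∀ σ, a σ * θ < b σ) (hθN : θ < N) {x : ℝ} (hx : 0 ≤ x) (hIx : 0 ≤ I x)
    (hSIx : S x + I x ≤ N) : ∃ T, x ≤ T ∧ I T ≤ N - θ := by
  -- while `I > N - θ` we have `S < θ`, so `I` decays at the uniform exponential rate `ρ`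
  obtain ⟨σ₀, hσ₀⟩ := Finite.exists_min fun σ => b σ - a σ * θ
  set ρ := b σ₀ - a σ₀ * θ
  have hρ : 0 < ρ := sub_pos.2 (hθ σ₀)
  have hdecay : Tendsto (fun s => I x * exp (-(ρ * s))) atTop (𝓝 0) := by
    simpa using (tendsto_exp_neg_atTop_nhds_zero.comp
      (tendsto_id.const_mul_atTop hρ)).const_mul (I x)
  obtain ⟨s₀, hs₀⟩ := eventually_atTop.1 (hdecay.eventually (ge_mem_nhds (sub_pos.2 hθN)))
  set s := max s₀ 0
  have hs : 0 ≤ s := le_max_right _ _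
  by_contra! hI
  have key := hsol.nonpos_of_deriv_le_mul hξ 0 1 (g := fun u => -(I x * exp (-(ρ * (u - x)))))
    (g' := fun u => ρ * (I x * exp (-(ρ * (u - x)))))
    (fun u => ((((hasDerivAt_id u).sub_const x).const_mul ρ).neg.exp.const_mul (I x)).neg
      |>.congr_deriv (by simp only [id, Pi.neg_apply, mul_one]; ring))
    (K := -ρ) hx
    (fun u hu h0 => by
      have hIu := hsol.infected_nonneg hξ hx hIx hu.1.le
      have hSIu := hsol.susceptible_add_infected_le hξ hb hc hx hIx hSIx hu.1.le
      have := infected_rate_le (b := b (ξ u)) (ha (ξ u)) hIu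
        (show S u ≤ θ by linarith [hI u hu.1.le])
      nlinarith [mul_le_mul_of_nonneg_right (hσ₀ (ξ u)) hIu])
    (by simp) (x + s) ⟨le_add_of_nonneg_right hs, le_rfl⟩
  have := hs₀ s (le_max_left _ _)
  have := hI (x + s) (le_add_of_nonneg_right hs)
  simp only [add_sub_cancel_left] at key
  linarith

theorem exists_le_susceptible {Smin θ : ℝ} (hsol : IsSIRSSolution N a b c ξ S I)
    (hξ : IsSwitchingSignal ξ) (ha : ∀ σ, 0 ≤ a σ) (hb : ∀ σ, 0 ≤ b σ) (hc : ∀ σ, 0 ≤ c σ)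
    (hθ : ∀ σ, a σ * θ ≤ b σ) (hθ0 : 0 ≤ θ) (hSmin : 0 ≤ Smin)
    (hrate : ∀ σ, 0 < -(N * a σ * Smin) + c σ * (θ - Smin))
    {x : ℝ} (hx : 0 ≤ x) (hIx : 0 ≤ I x) (hSIx : S x + I x ≤ N) (hIθx : I x ≤ N - θ) :
    ∃ T, x ≤ T ∧ Smin ≤ S T := by
  -- while `S < Smin`, `S` grows at least at the uniform linear rate `δ`
  obtain ⟨σ₀, hσ₀⟩ := Finite.exists_min fun σ => -(N * a σ * Smin) + c σ * (θ - Smin)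
  set δ := -(N * a σ₀ * Smin) + c σ₀ * (θ - Smin)
  have hδ : 0 < δ := hrate σ₀
  set s := |Smin - S x| / δ
  have hs : 0 ≤ s := by positivity
  by_contra! hS
  have key := hsol.nonpos_of_deriv_le_mul hξ (-1) 0 (g := fun u => S x + δ * (u - x))
    (fun u => ((((hasDerivAt_id u).sub_const x).const_mul δ).const_add (S x)))
    (K := 0) hx
    (fun u hu h0 => by
      have := susceptible_rate_ge (ha (ξ u)) (hc (ξ u)) hSmin hθ0 (hS u hu.1.le).le
        (hsol.infected_nonneg hξ hx hIx hu.1.le)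
        (hsol.infected_le hξ ha hb hc hθ hx hIx hSIx hIθx hu.1.le)
      nlinarith [hσ₀ (ξ u)])
    (by simp) (x + s) ⟨le_add_of_nonneg_right hs, le_rfl⟩
  have hδs : δ * s = |Smin - S x| := mul_div_cancel₀ _ hδ.ne'
  have := hS (x + s) (le_add_of_nonneg_right hs)
  simp only [add_sub_cancel_left] at key
  linarith [le_abs_self (Smin - S x)]

theorem mem_sirsQuadrangle_of_mem {Smin θ : ℝ} (hsol : IsSIRSSolution N a b c ξ S I)
    (hξ : IsSwitchingSignal ξ) (ha : ∀ σ, 0 ≤ a σ) (hb : ∀ σ, 0 ≤ b σ) (hc : ∀ σ, 0 ≤ c σ)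
    (hθ : ∀ σ, a σ * θ ≤ b σ) (hθ0 : 0 ≤ θ) (hSmin : 0 ≤ Smin)
    (hrate : ∀ σ, 0 < -(N * a σ * Smin) + c σ * (θ - Smin))
    {x : ℝ} (hx : 0 ≤ x) (hQx : (S x, I x) ∈ sirsQuadrangle N Smin θ) {t : ℝ} (hxt : x ≤ t) :
    (S t, I t) ∈ sirsQuadrangle N Smin θ := by
  obtain ⟨hSx, hIx, hSIx, hIθx⟩ := hQx
  exact ⟨hsol.le_susceptible hξ ha hb hc hθ hθ0 hSmin hrate hx hSx hIx hSIx hIθx hxt,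
    hsol.infected_nonneg hξ hx hIx hxt, hsol.susceptible_add_infected_le hξ hb hc hx hIx hSIx hxt,
    hsol.infected_le hξ ha hb hc hθ hx hIx hSIx hIθx hxt⟩

theorem eventually_mem_sirsQuadrangle {Smin θ : ℝ} (hsol : IsSIRSSolution N a b c ξ S I)
    (hξ : IsSwitchingSignal ξ) (ha : ∀ σ, 0 ≤ a σ) (hb : ∀ σ, 0 ≤ b σ) (hc : ∀ σ, 0 ≤ c σ)
    (hθ : ∀ σ, a σ * θ < b σ) (hθ0 : 0 ≤ θ) (hθN : θ < N) (hSmin : 0 ≤ Smin)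
    (hrate : ∀ σ, 0 < -(N * a σ * Smin) + c σ * (θ - Smin))
    (hI0 : 0 ≤ I 0) (hSI0 : S 0 + I 0 ≤ N) :
    ∃ T, 0 ≤ T ∧ ∀ t, T ≤ t → (S t, I t) ∈ sirsQuadrangle N Smin θ := by
  have hθ' : ∀ σ, a σ * θ ≤ b σ := fun σ => (hθ σ).le
  obtain ⟨T₁, hT₁, hIθT₁⟩ := hsol.exists_infected_le hξ ha hb hc hθ hθN le_rfl hI0 hSI0
  have hIT₁ := hsol.infected_nonneg hξ le_rfl hI0 hT₁
  have hSIT₁ := hsol.susceptible_add_infected_le hξ hb hc le_rfl hI0 hSI0 hT₁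
  obtain ⟨T₂, hT₂, hST₂⟩ :=
    hsol.exists_le_susceptible hξ ha hb hc hθ' hθ0 hSmin hrate hT₁ hIT₁ hSIT₁ hIθT₁
  have hT₂0 : 0 ≤ T₂ := hT₁.trans hT₂
  refine ⟨T₂, hT₂0, fun t ht => hsol.mem_sirsQuadrangle_of_mem hξ ha hb hc hθ' hθ0 hSmin hrate
    hT₂0 ⟨hST₂, ?_, ?_, ?_⟩ ht⟩
  exacts [hsol.infected_nonneg hξ hT₁ hIT₁ hT₂,
    hsol.susceptible_add_infected_le hξ hb hc hT₁ hIT₁ hSIT₁ hT₂,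
    hsol.infected_le hξ ha hb hc hθ' hT₁ hIT₁ hSIT₁ hIθT₁ hT₂]

end IsSIRSSolution

theorem sirs_quadrangle_invariant_and_absorbing_general
    (N : ℝ) (a b c : Env → ℝ)
    (ha : ∀ σ, 0 < a σ) (hb : ∀ σ, 0 < b σ) (hc : ∀ σ, 0 < c σ)
    (horder : b true / a true ≤ b false / a false)
    (hsup : b true / a true < N)
    (Smin : ℝ) (hSmin0 : 0 < Smin)
    (hSmin2 : ∀ σ, 0 < -(N * a σ * Smin) + c σ * (b true / (2 * a true) - Smin))
    (Q : Set (ℝ × ℝ))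
    (hQ : Q = {p : ℝ × ℝ | Smin ≤ p.1 ∧ 0 ≤ p.2 ∧ p.1 + p.2 ≤ N ∧
      p.2 ≤ N - b true / (2 * a true)}) :
    (∀ (ξ : ℝ → Env), IsSwitchingSignal ξ →
      ∀ (S I : ℝ → ℝ), IsSIRSSolution N a b c ξ S I →
      ∀ t₀ : ℝ, 0 ≤ t₀ → (S t₀, I t₀) ∈ Q →
      ∀ t : ℝ, t₀ ≤ t → (S t, I t) ∈ Q) ∧
    (∀ (ξ : ℝ → Env), IsSwitchingSignal ξ →
      ∀ (S I : ℝ → ℝ), IsSIRSSolution N a b c ξ S I →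
      0 < S 0 → 0 < I 0 → S 0 + I 0 ≤ N →
      ∃ T : ℝ, 0 ≤ T ∧ ∀ t : ℝ, T ≤ t → (S t, I t) ∈ Q) := by
  subst hQ
  set θ := b true / (2 * a true)
  have hθ_lt : θ < b true / a true :=
    div_lt_div_of_pos_left (hb true) (ha true) (by linarith [ha true])
  have hθ : ∀ σ, a σ * θ < b σ := mul_lt_of_lt_min_ratio ha horder hθ_lt
  have hθ0 : 0 ≤ θ := (div_pos (hb true) (mul_pos two_pos (ha true))).le
  have ha' : ∀ σ, 0 ≤ a σ := fun σ => (ha σ).le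
  have hb' : ∀ σ, 0 ≤ b σ := fun σ => (hb σ).le
  have hc' : ∀ σ, 0 ≤ c σ := fun σ => (hc σ).le
  exact ⟨fun ξ hξ S I hsol t₀ ht₀ hQ₀ t ht => hsol.mem_sirsQuadrangle_of_mem hξ ha' hb' hc'
      (fun σ => (hθ σ).le) hθ0 hSmin0.le hSmin2 ht₀ hQ₀ ht,
    fun ξ hξ S I hsol _ hI0 hSI0 => hsol.eventually_mem_sirsQuadrangle hξ ha' hb' hc' hθ hθ0
      (hθ_lt.trans hsup) hSmin0.le hSmin2 hI0.le hSI0⟩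

/-- the quadrangle `Q = ABCD` is forward invariant and absorbs
all positive solutions. -/
theorem sirs_quadrangle_invariant_and_absorbing
    (N : ℝ) (hN : 0 < N) (a b c : Env → ℝ)
    (ha : ∀ σ, 0 < a σ) (hb : ∀ σ, 0 < b σ) (hc : ∀ σ, 0 < c σ)
    (horder : b true / a true ≤ b false / a false)
    (hsup : b true / a true < N)
    (Smin : ℝ) (hSmin0 : 0 < Smin) (hSmin1 : Smin < b true / (2 * a true))
    (hSmin2 : ∀ σ, 0 < -(N * a σ * Smin) + c σ * (b true / (2 * a true) - Smin))
    (Q : Set (ℝ × ℝ))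
    (hQ : Q = {p : ℝ × ℝ | Smin ≤ p.1 ∧ 0 ≤ p.2 ∧ p.1 + p.2 ≤ N ∧
      p.2 ≤ N - b true / (2 * a true)}) :
    (∀ (ξ : ℝ → Env), IsSwitchingSignal ξ →
      ∀ (S I : ℝ → ℝ), IsSIRSSolution N a b c ξ S I →
      ∀ t₀ : ℝ, 0 ≤ t₀ → (S t₀, I t₀) ∈ Q →
      ∀ t : ℝ, t₀ ≤ t → (S t, I t) ∈ Q) ∧
    (∀ (ξ : ℝ → Env), IsSwitchingSignal ξ →
      ∀ (S I : ℝ → ℝ), IsSIRSSolution N a b c ξ S I →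
      0 < S 0 → 0 < I 0 → S 0 + I 0 ≤ N →
      ∃ T : ℝ, 0 ≤ T ∧ ∀ t : ℝ, T ≤ t → (S t, I t) ∈ Q) :=
  sirs_quadrangle_invariant_and_absorbing_general N a b c ha hb hc horder hsup Smin hSmin0 hSmin2 Q
    hQ
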